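/- arXiv:2008.01668 — 2 statements merged into one kernel-verified Lean document; each statement's English description precedes it below -/
import Mathlib

section
/- Let H and K be complex Hilbert spaces, U : K → H an isometry (U*U = id_K), and A a positive invertible bounded operator on H (so that U*AU is positive and invertible on K). Then for every h ∈ K, setting v := A⁻¹U h − U (U*AU)⁻¹ h, one has ⟨h, U*A⁻¹U h⟩ − ⟨h, (U*AU)⁻¹ h⟩ = ⟨v, A v⟩, and in particular ⟨h, U*A⁻¹U h⟩ ≥ ⟨h, (U*AU)⁻¹ h⟩. -/
open ContinuousLinearMap

/-- Lemma 2.1 of Carlen–Vershynina.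
Let `H`, `K` be complex Hilbert spaces, `U : K → H` an isometry (`U*U = 1`), and `A` a
positive invertible bounded operator on `H` (with inverse `B`; then `U*AU` is positive and
invertible on `K`, with inverse `C`).  Then for every `h ∈ K`, setting
`v := A⁻¹ U h − U (U*AU)⁻¹ h`, one has
`⟨h, U*A⁻¹U h⟩ − ⟨h, (U*AU)⁻¹ h⟩ = ⟨v, A v⟩`, and in particular
`⟨h, U*A⁻¹U h⟩ ≥ ⟨h, (U*AU)⁻¹ h⟩` (an inequality of real numbers, both inner products
being real). -/
theorem stmt0 {H K : Type*}
    [NormedAddCommGroup H] [InnerProductSpace ℂ H] [CompleteSpace H]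
    [NormedAddCommGroup K] [InnerProductSpace ℂ K] [CompleteSpace K]
    (U : K →L[ℂ] H) (hU : ContinuousLinearMap.adjoint U ∘L U = 1)
    (A : H →L[ℂ] H) (hA : IsSelfAdjoint A)
    (hApos : ∃ c : ℝ, 0 < c ∧ ∀ ξ : H, c * ‖ξ‖ ^ 2 ≤ (inner (𝕜 := ℂ) ξ (A ξ)).re)
    (B : H →L[ℂ] H) (hAB : A ∘L B = 1) (hBA : B ∘L A = 1)
    (C : K →L[ℂ] K) (hC1 : (ContinuousLinearMap.adjoint U ∘L A ∘L U) ∘L C = 1)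
    (hC2 : C ∘L (ContinuousLinearMap.adjoint U ∘L A ∘L U) = 1)
    (h : K) :
    (inner (𝕜 := ℂ) h ((ContinuousLinearMap.adjoint U ∘L B ∘L U) h)
        - inner (𝕜 := ℂ) h (C h)
      = inner (𝕜 := ℂ) (B (U h) - U (C h)) (A (B (U h) - U (C h)))) ∧
    (inner (𝕜 := ℂ) h (C h)).re
      ≤ (inner (𝕜 := ℂ) h ((ContinuousLinearMap.adjoint U ∘L B ∘L U) h)).re := by
  have hAapp : ∀ x, A (B x) = x := fun x => congrFun (congrArg DFunLike.coe hAB) x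
  have hBapp : ∀ x, B (A x) = x := fun x => congrFun (congrArg DFunLike.coe hBA) x
  have hUapp : ∀ x, adjoint U (U x) = x := fun x => congrFun (congrArg DFunLike.coe hU) x
  have hCapp : ∀ x, adjoint U (A (U (C x))) = x :=
    fun x => congrFun (congrArg DFunLike.coe hC1) x
  -- B self-adjoint
  have hAB' : A * B = 1 := hAB
  have hBA'' : star B * A = 1 := by
    have := congrArg star hAB'
    rwa [star_mul, star_one, hA.star_eq] at this
  have hBsa : IsSelfAdjoint B := by
    have : star B * (A * B) = (star B * A) * B := (mul_assoc _ _ _).symm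
    rw [hAB', hBA'', mul_one, one_mul] at this
    exact this
  -- C self-adjoint
  have hCsa : IsSelfAdjoint C := by
    have hsa : IsSelfAdjoint (adjoint U ∘L A ∘L U) := by
      unfold IsSelfAdjoint
      rw [star_eq_adjoint, adjoint_comp, adjoint_comp, adjoint_adjoint, hA.adjoint_eq,
        comp_assoc]
    have hC1' : (adjoint U ∘L A ∘L U) * C = 1 := hC1
    have h1 : star C * (adjoint U ∘L A ∘L U) = 1 := by
      have := congrArg star hC1'
      rwa [star_mul, star_one, hsa.star_eq] at this
    have : star C * ((adjoint U ∘L A ∘L U) * C) = (star C * (adjoint U ∘L A ∘L U)) * C :=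
      (mul_assoc _ _ _).symm
    rw [hC1', h1, mul_one, one_mul] at this
    exact this
  have symB : ∀ x y, inner (𝕜 := ℂ) (B x) y = inner (𝕜 := ℂ) x (B y) := fun x y => by
    conv_lhs => rw [← hBsa.adjoint_eq]
    exact adjoint_inner_left B y x
  have symC : ∀ x y, inner (𝕜 := ℂ) (C x) y = inner (𝕜 := ℂ) x (C y) := fun x y => by
    conv_lhs => rw [← hCsa.adjoint_eq]
    exact adjoint_inner_left C y x
  set v := B (U h) - U (C h) with hv
  have key : inner (𝕜 := ℂ) h ((adjoint U ∘L B ∘L U) h) - inner (𝕜 := ℂ) h (C h)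
      = inner (𝕜 := ℂ) v (A v) := by
    have hAv : A v = U h - A (U (C h)) := by
      simp [hv, map_sub, hAapp]
    rw [hAv, hv, inner_sub_left, inner_sub_right, inner_sub_right]
    have t1 : inner (𝕜 := ℂ) (B (U h)) (U h)
        = inner (𝕜 := ℂ) h ((adjoint U ∘L B ∘L U) h) := by
      rw [symB, comp_apply, comp_apply, adjoint_inner_right]
    have t2 : inner (𝕜 := ℂ) (B (U h)) (A (U (C h))) = inner (𝕜 := ℂ) h (C h) := by
      rw [symB, hBapp, ← adjoint_inner_right, hUapp]
    have t3 : inner (𝕜 := ℂ) (U (C h)) (U h) = inner (𝕜 := ℂ) h (C h) := by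
      rw [← adjoint_inner_right, hUapp, symC]
    have t4 : inner (𝕜 := ℂ) (U (C h)) (A (U (C h))) = inner (𝕜 := ℂ) h (C h) := by
      rw [← adjoint_inner_right, hCapp, symC]
    rw [t1, t2, t3, t4]
    ring
  refine ⟨key, ?_⟩
  obtain ⟨c, hc, hpos⟩ := hApos
  have h1 : 0 ≤ (inner (𝕜 := ℂ) v (A v)).re :=
    le_trans (by positivity) (hpos v)
  have := congrArg Complex.re key
  rw [Complex.sub_re] at this
  linarith
end

section
/- Let ρ and σ be faithful states of M and t ∈ ℝ. Then ‖ρ − R_σ^{−t}(ρ_N)‖₁ ≤ 2 ‖ρ^{1/2} − σ^{1/2+it} σ_N^{−1/2−it} ρ_N^{1/2+it} ρ^{−it}‖₂. -/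
open scoped ComplexOrder
open MeasureTheory Matrix

namespace QFDiv

/-- `Mat n` is the matrix algebra `Mₙ(ℂ)`. -/
abbrev Mat (n : ℕ) := Matrix (Fin n) (Fin n) ℂ

/-- Hilbert–Schmidt inner product `⟨x, y⟩ = tr(x* y)`. -/
noncomputable def hsInner {n : ℕ} (x y : Mat n) : ℂ := (xᴴ * y).trace

/-- Hilbert–Schmidt norm `‖x‖₂ = tr(x* x)^{1/2}`. -/
noncomputable def hsNorm {n : ℕ} (x : Mat n) : ℝ := Real.sqrt ((xᴴ * x).trace.re)

/-- Trace norm `‖x‖₁ = tr((x* x)^{1/2})`. -/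
noncomputable def traceNorm {n : ℕ} (x : Mat n) : ℝ :=
  (((Matrix.posSemidef_conjTranspose_mul_self x).1.eigenvectorUnitary : Mat n) *
    Matrix.diagonal (fun i =>
      ((Real.sqrt ((Matrix.posSemidef_conjTranspose_mul_self x).1.eigenvalues i) : ℝ) : ℂ)) *
    (star (Matrix.posSemidef_conjTranspose_mul_self x).1.eigenvectorUnitary : Mat n)).trace.re

/-- Operator norm `‖x‖_∞` (as an operator on the Euclidean space `ℂⁿ`). -/
noncomputable def opNorm {n : ℕ} (x : Mat n) : ℝ :=
  ‖Matrix.toEuclideanCLM (𝕜 := ℂ) x‖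

/-- Complex matrix power `A^z := exp(z · log A)` for Hermitian (in particular positive
definite) `A`, defined by the spectral functional calculus; junk value `0` otherwise. -/
noncomputable def mpow {n : ℕ} (A : Mat n) (z : ℂ) : Mat n :=
  if h : A.IsHermitian then
    (h.eigenvectorUnitary : Mat n) *
      Matrix.diagonal (fun i => (h.eigenvalues i : ℂ) ^ z) *
      star (h.eigenvectorUnitary : Mat n)
  else 0

/-- Matrix logarithm via the spectral functional calculus. -/
noncomputable def mlog {n : ℕ} (A : Mat n) : Mat n :=
  if h : A.IsHermitian then
    (h.eigenvectorUnitary : Mat n) *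
      Matrix.diagonal (fun i => (Real.log (h.eigenvalues i) : ℂ)) *
      star (h.eigenvectorUnitary : Mat n)
  else 0

/-- `f(Δ(σ,ω))(x)`, where `Δ(σ,ω) : y ↦ σ y ω⁻¹` is the relative modular operator on the
Hilbert–Schmidt space and `f(Δ(σ,ω))` is its functional calculus:  writing `σ = U diag(s) U*`
and `ω = V diag(w) V*`, the operator `Δ(σ,ω)` has orthonormal eigenvectors `U Eᵢⱼ V*` with
eigenvalues `sᵢ/wⱼ`, so `f(Δ(σ,ω))(x) = U (f(sᵢ/wⱼ) ⊙ (U* x V)) V*`. -/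
noncomputable def modApply {n : ℕ} (f : ℝ → ℝ) (σ ω : Mat n) (x : Mat n) : Mat n :=
  if hσ : σ.IsHermitian then
    if hω : ω.IsHermitian then
      (hσ.eigenvectorUnitary : Mat n) *
        Matrix.of (fun i j =>
          (f (hσ.eigenvalues i / hω.eigenvalues j) : ℂ) *
            ((star (hσ.eigenvectorUnitary : Mat n) * x * (hω.eigenvectorUnitary : Mat n)) i j)) *
        star (hω.eigenvectorUnitary : Mat n)
    else 0
  else 0

/-- Standard `f`-divergence `Q_f(ρ‖σ) = ⟨ρ^{1/2}, f(Δ(σ,ρ))(ρ^{1/2})⟩`. -/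
noncomputable def Qf {n : ℕ} (f : ℝ → ℝ) (ρ σ : Mat n) : ℝ :=
  (hsInner (mpow ρ (1/2)) (modApply f σ ρ (mpow ρ (1/2)))).re

/-- Optimized `f`-divergence `Q̃_f(ρ‖σ) = sup_ω ⟨ρ^{1/2}, f(Δ(σ,ω))(ρ^{1/2})⟩`, where the
supremum runs over all faithful states `ω` of `Mₙ(ℂ)`. -/
noncomputable def Qopt {n : ℕ} (f : ℝ → ℝ) (ρ σ : Mat n) : ℝ :=
  ⨆ ω : {ω : Mat n // ω.PosDef ∧ ω.trace = 1},
    (hsInner (mpow ρ (1/2)) (modApply f σ ω.1 (mpow ρ (1/2)))).re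

/-- Optimized `f`-divergence on the subalgebra `N`: the supremum runs over the faithful
states `ω` of `N`. -/
noncomputable def QoptN {n : ℕ} (f : ℝ → ℝ) (N : StarSubalgebra ℂ (Mat n)) (ρ σ : Mat n) : ℝ :=
  ⨆ ω : {ω : Mat n // ω ∈ N ∧ ω.PosDef ∧ ω.trace = 1},
    (hsInner (mpow ρ (1/2)) (modApply f σ ω.1 (mpow ρ (1/2)))).re

/-- Umegaki relative entropy `D(ρ‖σ) = tr(ρ (log ρ − log σ))`. -/
noncomputable def relEnt {n : ℕ} (ρ σ : Mat n) : ℝ := ((ρ * (mlog ρ - mlog σ)).trace).re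

/-- `Q_{x²}(ρ‖σ) = tr(ρ⁻¹ σ²)`. -/
noncomputable def Qsq {n : ℕ} (ρ σ : Mat n) : ℝ := ((ρ⁻¹ * (σ * σ)).trace).re

/-- `Q_{x⁻¹}(ρ‖σ) = tr(ρ² σ⁻¹)`. -/
noncomputable def Qxinv {n : ℕ} (ρ σ : Mat n) : ℝ := ((ρ * ρ * σ⁻¹).trace).re

/-- Petz–Rényi relative quasi-entropy `Q_s(ρ‖σ) = tr(ρ^{1−s} σ^s)`. -/
noncomputable def Qs {n : ℕ} (s : ℝ) (ρ σ : Mat n) : ℝ :=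
  ((mpow ρ (1 - (s : ℂ)) * mpow σ (s : ℂ)).trace).re

/-- Petz–Rényi relative entropy `D_α(ρ‖σ) = (α−1)⁻¹ log tr(ρ^α σ^{1−α})`. -/
noncomputable def petzRenyi {n : ℕ} (α : ℝ) (ρ σ : Mat n) : ℝ :=
  (α - 1)⁻¹ * Real.log (((mpow ρ (α : ℂ) * mpow σ (1 - (α : ℂ))).trace).re)

/-- Sandwiched Rényi relative quasi-entropy
`Q̃_α(ρ‖σ) = (tr[(ρ^{1/2} σ^{−1/α'} ρ^{1/2})^α])^{1/α}` with `α' = α/(α−1)`,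
so that `−1/α' = (1−α)/α`. -/
noncomputable def sandQ {n : ℕ} (α : ℝ) (ρ σ : Mat n) : ℝ :=
  (((mpow (mpow ρ (1/2) * mpow σ (((1 - α)/α : ℝ) : ℂ) * mpow ρ (1/2)) (α : ℂ)).trace).re)
    ^ (1/α)

/-- Sandwiched Rényi relative entropy `D̃_α(ρ‖σ) = α' log Q̃_α(ρ‖σ)`. -/
noncomputable def sandD {n : ℕ} (α : ℝ) (ρ σ : Mat n) : ℝ :=
  (α/(α-1)) * Real.log (sandQ α ρ σ)

/-- Rotated Petz recovery map
`R_ρ^t(x) = ρ^{1/2−it} ρ_N^{−1/2+it} x ρ_N^{−1/2−it} ρ^{1/2+it}` (here `ρN` is the matrix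
`ρ_N = E(ρ)`). -/
noncomputable def rotPetz {n : ℕ} (ρ ρN : Mat n) (t : ℝ) (x : Mat n) : Mat n :=
  mpow ρ (1/2 - Complex.I * t) * mpow ρN (-(1/2) + Complex.I * t) * x *
    mpow ρN (-(1/2) - Complex.I * t) * mpow ρ (1/2 + Complex.I * t)

/-- The probability measure `dβ(t) = (π/2)(cosh(πt)+1)⁻¹ dt` on `ℝ`. -/
noncomputable def betaMeasure : Measure ℝ :=
  volume.withDensity fun t => ENNReal.ofReal (Real.pi / 2 * (Real.cosh (Real.pi * t) + 1)⁻¹)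

/-- Universal Petz recovery map `R_ρ^u(x) = ∫_ℝ R_ρ^{t/2}(x) dβ(t)` (Bochner integral,
computed entrywise). -/
noncomputable def univPetz {n : ℕ} (ρ ρN : Mat n) (x : Mat n) : Mat n :=
  Matrix.of fun i j => ∫ t : ℝ, rotPetz ρ ρN (t/2) x i j ∂betaMeasure

/-- `E` is the trace-preserving conditional expectation onto the subalgebra `N`, i.e. the
orthogonal projection of `Mₙ(ℂ)` onto `N` for the Hilbert–Schmidt inner product. -/
def IsCondExp {n : ℕ} (N : StarSubalgebra ℂ (Mat n)) (E : Mat n →ₗ[ℂ] Mat n) : Prop :=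
  (∀ x, E x ∈ N) ∧ (∀ x ∈ N, E x = x) ∧ (∀ x y, hsInner (E x) y = hsInner x (E y))

/-- `f` admits the integral representation
`f(x) = a + b x + ∫₀^∞ (1/(λ+x) − λ/(λ²+1)) dν(λ)` for `x > 0`, with `b ≥ 0` and
`∫ λ/(λ²+1) dν(λ) < ∞`. -/
def HasIntRep (f : ℝ → ℝ) (a b : ℝ) (ν : Measure ℝ) : Prop :=
  0 ≤ b ∧
  (∫⁻ l in Set.Ioi (0:ℝ), ENNReal.ofReal (l / (l^2 + 1)) ∂ν) < ⊤ ∧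
  ∀ x : ℝ, 0 < x →
    IntegrableOn (fun l => 1/(l + x) - l/(l^2 + 1)) (Set.Ioi 0) ν ∧
    f x = a + b*x + ∫ l in Set.Ioi (0:ℝ), (1/(l + x) - l/(l^2 + 1)) ∂ν


end QFDiv

/-!
With `A = ρ^{1/2}` and `B = σ^{1/2+it} σ_N^{-1/2-it} ρ_N^{1/2+it} ρ^{-it}` one has `A A* = ρ` and
`B B* = R_σ^{-t}(ρ_N)`. Both have unit Hilbert–Schmidt norm: `ρ` is a state, and the rotated Petz
map preserves the trace on `N` because `tr(σ Z) = tr(σ_N Z)` for `Z ∈ N`. The claim then follows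
from `‖A A* - B B*‖₁ ≤ (‖A‖₂ + ‖B‖₂) ‖A - B‖₂`, obtained by pairing
`A A* - B B* = A (A - B)* + (A - B) B*` with the sign unitary of `A A* - B B*` and applying
Cauchy–Schwarz. The complex powers of `σ_N` and `ρ_N` obey the usual rules because `E` preserves
positive definiteness: the spectral projections of `E x` are polynomials in `E x`, hence lie in
`N`, and `μ tr P = tr(E(x) P) = tr(x P) > 0` for the projection `P` onto an eigenvalue `μ`.
-/

namespace Matrix.IsHermitian

open Polynomial

variable {m : Type*} [Fintype m] [DecidableEq m] {A : Matrix m m ℂ} (hA : A.IsHermitian)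

/-- Functional calculus for complex-valued functions (Mathlib's `cfc` of a Hermitian matrix only
takes real-valued ones), as needed for the complex powers `A ^ z`. -/
noncomputable def spectralCalc : (ℝ → ℂ) →⋆ₐ[ℂ] Matrix m m ℂ where
  toFun g := Unitary.conjStarAlgAut ℂ _ hA.eigenvectorUnitary (diagonal (g ∘ hA.eigenvalues))
  map_zero' := by simp [Pi.zero_def, Function.comp_def]
  map_one' := by simp [Pi.one_def, Function.comp_def]
  map_mul' f g := by
    simp only [← map_mul, diagonal_mul_diagonal]
    rfl
  map_add' f g := by
    simp only [← map_add, diagonal_add]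
    rfl
  commutes' r := by
    rw [← AlgHomClass.commutes (Unitary.conjStarAlgAut ℂ _ hA.eigenvectorUnitary) r,
      algebraMap_eq_diagonal]
    rfl
  map_star' f := by
    simp only [← map_star, star_eq_conjTranspose, diagonal_conjTranspose]
    rfl

lemma spectralCalc_apply (g : ℝ → ℂ) :
    hA.spectralCalc g = (hA.eigenvectorUnitary : Matrix m m ℂ) *
      diagonal (fun i => g (hA.eigenvalues i)) * star (hA.eigenvectorUnitary : Matrix m m ℂ) :=
  rfl

lemma spectralCalc_congr {g g' : ℝ → ℂ} (h : ∀ i, g (hA.eigenvalues i) = g' (hA.eigenvalues i)) :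
    hA.spectralCalc g = hA.spectralCalc g' := by
  rw [spectralCalc_apply, spectralCalc_apply, funext h]

lemma spectralCalc_ofReal : hA.spectralCalc (fun r => (r : ℂ)) = A :=
  hA.spectral_theorem.symm

lemma cfc_eq_spectralCalc (f : ℝ → ℝ) : cfc f A = hA.spectralCalc (fun r => (f r : ℂ)) :=
  hA.cfc_eq f

lemma trace_spectralCalc (g : ℝ → ℂ) : (hA.spectralCalc g).trace = ∑ i, g (hA.eigenvalues i) := by
  rw [spectralCalc_apply, trace_mul_cycle, Unitary.coe_star_mul_self, one_mul, trace_diagonal]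

lemma exists_aeval_eq_spectralCalc (g : ℝ → ℂ) : ∃ p : ℂ[X], aeval A p = hA.spectralCalc g := by
  classical
  let nodes : Finset ℂ := Finset.univ.image fun i => (hA.eigenvalues i : ℂ)
  refine ⟨Lagrange.interpolate nodes id (fun z => g z.re), ?_⟩
  conv_lhs => rw [← hA.spectralCalc_ofReal, aeval_algHom_apply]
  refine hA.spectralCalc_congr fun i => ?_
  have hi : (hA.eigenvalues i : ℂ) ∈ nodes := Finset.mem_image_of_mem _ (Finset.mem_univ i)
  rw [aeval_pi_apply₂, coe_aeval_eq_eval, ← id_eq (hA.eigenvalues i : ℂ),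
    Lagrange.eval_interpolate_at_node _ (Set.injOn_id _) hi, Complex.ofReal_re]

lemma spectralCalc_mem {N : StarSubalgebra ℂ (Matrix m m ℂ)} (hAN : A ∈ N) (g : ℝ → ℂ) :
    hA.spectralCalc g ∈ N := by
  obtain ⟨p, hp⟩ := hA.exists_aeval_eq_spectralCalc g
  rw [← hp]
  exact Algebra.adjoin_le (Set.singleton_subset_iff.mpr hAN)
    (aeval_mem_adjoin_singleton ℂ A)

end Matrix.IsHermitian

namespace Matrix.PosDef

variable {m : Type*} [Fintype m]

lemma re_trace_mul_mul_conjTranspose_pos {x : Matrix m m ℂ} (hx : x.PosDef) {y : Matrix m m ℂ}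
    (hy : y ≠ 0) : 0 < (y * x * yᴴ).trace.re := by
  let _ := toMatrixNormedAddCommGroup x hx
  let _ := toMatrixInnerProductSpace x hx.posSemidef
  have h : (y * x * yᴴ).trace.re = ‖y‖ ^ 2 := by
    rw [← inner_self_eq_norm_sq (𝕜 := ℂ)]
    rfl
  rw [h]
  exact pow_pos (norm_pos_iff.mpr hy) 2

end Matrix.PosDef

lemma StarSubalgebra.eq_of_forall_trace_mul_eq {m : Type*} [Fintype m] [DecidableEq m]
    {N : StarSubalgebra ℂ (Matrix m m ℂ)} {a b : Matrix m m ℂ} (ha : a ∈ N) (hb : b ∈ N)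
    (h : ∀ y ∈ N, (a * y).trace = (b * y).trace) : a = b := by
  have hd : (a - b)ᴴ ∈ N := star_mem (sub_mem ha hb)
  rw [← sub_eq_zero, ← trace_mul_conjTranspose_self_eq_zero_iff, Matrix.sub_mul, trace_sub,
    h _ hd, sub_self]

namespace QFDiv

section MatrixPower

variable {n : ℕ} {A : Mat n}

lemma mpow_eq_spectralCalc (hA : A.IsHermitian) (z : ℂ) :
    mpow A z = hA.spectralCalc (fun r => (r : ℂ) ^ z) := by
  rw [mpow, dif_pos hA]
  rfl

lemma mpow_zero (hA : A.IsHermitian) : mpow A 0 = 1 := by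
  simp only [mpow_eq_spectralCalc hA, Complex.cpow_zero]
  exact map_one _

lemma mpow_one (hA : A.IsHermitian) : mpow A 1 = A := by
  simp only [mpow_eq_spectralCalc hA, Complex.cpow_one]
  exact hA.spectralCalc_ofReal

lemma mpow_mul_mpow (hA : A.PosDef) (z w : ℂ) : mpow A z * mpow A w = mpow A (z + w) := by
  simp only [mpow_eq_spectralCalc hA.isHermitian, ← map_mul]
  exact hA.isHermitian.spectralCalc_congr fun i =>
    (Complex.cpow_add _ _ (Complex.ofReal_ne_zero.mpr (hA.eigenvalues_pos i).ne')).symm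

lemma mul_mpow (hA : A.PosDef) (z : ℂ) : A * mpow A z = mpow A (1 + z) := by
  rw [← mpow_mul_mpow hA, mpow_one hA.isHermitian]

lemma conjTranspose_mpow (hA : A.PosDef) (z : ℂ) : (mpow A z)ᴴ = mpow A (star z) := by
  rw [mpow_eq_spectralCalc hA.isHermitian, mpow_eq_spectralCalc hA.isHermitian,
    ← star_eq_conjTranspose, ← map_star]
  refine hA.isHermitian.spectralCalc_congr fun i => ?_
  have harg : (hA.isHermitian.eigenvalues i : ℂ).arg ≠ Real.pi := by
    rw [Complex.arg_ofReal_of_nonneg (hA.eigenvalues_pos i).le]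
    exact Real.pi_pos.ne
  rw [Pi.star_apply, Complex.star_def, Complex.cpow_conj _ _ harg, Complex.conj_ofReal]

lemma mpow_mul_conjTranspose_mpow (hA : A.PosDef) (z : ℂ) :
    mpow A z * (mpow A z)ᴴ = mpow A (2 * z.re) := by
  rw [conjTranspose_mpow hA, mpow_mul_mpow hA, Complex.star_def, Complex.add_conj,
    Complex.ofReal_mul, Complex.ofReal_ofNat]

lemma mpow_half_mul_conjTranspose (hA : A.PosDef) :
    mpow A (1/2) * (mpow A (1/2))ᴴ = A := by
  rw [mpow_mul_conjTranspose_mpow hA, show (2 * ((1/2 : ℂ).re : ℂ)) = 1 by simp,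
    mpow_one hA.isHermitian]

lemma mpow_mem {N : StarSubalgebra ℂ (Mat n)} (hA : A.IsHermitian) (hAN : A ∈ N) (z : ℂ) :
    mpow A z ∈ N := by
  rw [mpow_eq_spectralCalc hA]
  exact hA.spectralCalc_mem hAN _

end MatrixPower

section HilbertSchmidt

variable {n : ℕ}

lemma re_hsInner_le_hsNorm_mul_hsNorm (x y : Mat n) :
    (hsInner x y).re ≤ hsNorm x * hsNorm y := by
  let _ := toMatrixSeminormedAddCommGroup (1 : Mat n) PosSemidef.one
  let _ := toMatrixInnerProductSpace (1 : Mat n) PosSemidef.one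
  have hinner : ∀ x y : Mat n, hsInner x y = inner ℂ x y := fun x y => by
    rw [hsInner, trace_mul_comm]
    -- the inner product attached to the weight `1` is `⟪x, y⟫ = tr(y * 1 * xᴴ)`
    show _ = (y * 1 * xᴴ).trace
    rw [Matrix.mul_one]
  have hnorm : ∀ x : Mat n, hsNorm x = ‖x‖ := fun x => by
    rw [hsNorm, ← Real.sqrt_sq (norm_nonneg x), ← inner_self_eq_norm_sq (𝕜 := ℂ), ← hinner]
    rfl
  rw [hinner, hnorm, hnorm]
  exact re_inner_le_norm (𝕜 := ℂ) x y

lemma hsNorm_eq_one_of_trace_mul_conjTranspose {x : Mat n} (h : (x * xᴴ).trace = 1) :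
    hsNorm x = 1 := by
  rw [hsNorm, trace_mul_comm, h, Complex.one_re, Real.sqrt_one]

lemma hsNorm_mul_of_mem_unitary {S : Mat n} (hS : S ∈ unitary (Mat n)) (x : Mat n) :
    hsNorm (S * x) = hsNorm x := by
  rw [hsNorm, hsNorm, conjTranspose_mul, Matrix.mul_assoc, ← Matrix.mul_assoc Sᴴ,
    ← star_eq_conjTranspose S, Unitary.star_mul_self_of_mem hS, Matrix.one_mul]

end HilbertSchmidt

section TraceNorm

variable {n : ℕ}

lemma traceNorm_eq_sum_abs_eigenvalues {M : Mat n} (hM : M.IsHermitian) :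
    traceNorm M = ∑ i, |hM.eigenvalues i| := by
  have hsqrt : cfc Real.sqrt (Mᴴ * M) = cfc (fun r : ℝ => |r|) M := by
    rw [hM.eq, ← pow_two, ← cfc_comp_pow Real.sqrt 2 M]
    exact cfc_congr fun r _ => Real.sqrt_sq_eq_abs r
  have hdef : traceNorm M = (cfc Real.sqrt (Mᴴ * M)).trace.re := by
    rw [(posSemidef_conjTranspose_mul_self M).1.cfc_eq_spectralCalc]
    rfl
  rw [hdef, hsqrt, hM.cfc_eq_spectralCalc, hM.trace_spectralCalc, Complex.re_sum]
  simp only [Complex.ofReal_re]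

lemma exists_mem_unitary_traceNorm_eq_re_trace_mul {M : Mat n} (hM : M.IsHermitian) :
    ∃ S ∈ unitary (Mat n), traceNorm M = (S * M).trace.re := by
  let sign : ℝ → ℂ := fun r => if r < 0 then -1 else 1
  have hsign : star sign * sign = 1 := by
    funext r
    by_cases hr : r < 0 <;> simp [sign, hr]
  refine ⟨hM.spectralCalc sign, ?_, ?_⟩
  · rw [Unitary.mem_iff, ← map_star, ← map_mul, ← map_mul, mul_comm sign, hsign, map_one]
    exact ⟨rfl, rfl⟩
  · have hSM : hM.spectralCalc sign * M = hM.spectralCalc (sign * fun r : ℝ => (r : ℂ)) := by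
      rw [map_mul, hM.spectralCalc_ofReal]
    rw [hSM, hM.trace_spectralCalc, Complex.re_sum, traceNorm_eq_sum_abs_eigenvalues hM]
    refine Finset.sum_congr rfl fun i _ => ?_
    by_cases hi : hM.eigenvalues i < 0
    · simp [sign, hi, abs_of_neg hi]
    · simp [sign, hi, abs_of_nonneg (not_lt.mp hi)]

lemma traceNorm_mul_conjTranspose_sub_le (A B : Mat n) :
    traceNorm (A * Aᴴ - B * Bᴴ) ≤ (hsNorm A + hsNorm B) * hsNorm (A - B) := by
  have hM : (A * Aᴴ - B * Bᴴ).IsHermitian :=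
    (isHermitian_mul_conjTranspose_self A).sub (isHermitian_mul_conjTranspose_self B)
  obtain ⟨S, hS, hnorm⟩ := exists_mem_unitary_traceNorm_eq_re_trace_mul hM
  have hsplit : S * (A * Aᴴ - B * Bᴴ) = S * A * (A - B)ᴴ + S * (A - B) * Bᴴ := by
    simp only [conjTranspose_sub, Matrix.mul_sub, Matrix.sub_mul, Matrix.mul_assoc]
    abel
  have htrace : ∀ X Y : Mat n, (S * X * Yᴴ).trace = hsInner Y (S * X) := fun X Y =>
    trace_mul_comm _ _
  calc traceNorm (A * Aᴴ - B * Bᴴ)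
      = (hsInner (A - B) (S * A)).re + (hsInner B (S * (A - B))).re := by
        rw [hnorm, hsplit, trace_add, htrace, htrace, Complex.add_re]
    _ ≤ hsNorm (A - B) * hsNorm A + hsNorm B * hsNorm (A - B) := by
        grw [re_hsInner_le_hsNorm_mul_hsNorm, re_hsInner_le_hsNorm_mul_hsNorm,
          hsNorm_mul_of_mem_unitary hS, hsNorm_mul_of_mem_unitary hS]
    _ = (hsNorm A + hsNorm B) * hsNorm (A - B) := by ring

end TraceNorm

section ConditionalExpectation

variable {n : ℕ} {N : StarSubalgebra ℂ (Mat n)}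

variable {E : Mat n →ₗ[ℂ] Mat n}

namespace IsCondExp

lemma trace_mul_of_mem (hE : IsCondExp N E) (x : Mat n) {y : Mat n} (hy : y ∈ N) :
    (E x * y).trace = (x * y).trace := by
  have hyH : yᴴ ∈ N := star_mem hy
  calc (E x * y).trace = hsInner yᴴ (E x) := by
        rw [hsInner, conjTranspose_conjTranspose, trace_mul_comm]
    _ = hsInner yᴴ x := by rw [← hE.2.2, hE.2.1 _ hyH]
    _ = (x * y).trace := by rw [hsInner, conjTranspose_conjTranspose, trace_mul_comm]

lemma trace_eq (hE : IsCondExp N E) (x : Mat n) : (E x).trace = x.trace := by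
  simpa using hE.trace_mul_of_mem x (one_mem N)

lemma isHermitian (hE : IsCondExp N E) {x : Mat n} (hx : x.IsHermitian) : (E x).IsHermitian := by
  refine StarSubalgebra.eq_of_forall_trace_mul_eq (star_mem (hE.1 x)) (hE.1 x) fun y hy => ?_
  have hyH : yᴴ ∈ N := star_mem hy
  calc ((E x)ᴴ * y).trace = star (E x * yᴴ).trace := by
        rw [← trace_conjTranspose, conjTranspose_mul, conjTranspose_conjTranspose, trace_mul_comm]
    _ = star (x * yᴴ).trace := by rw [hE.trace_mul_of_mem x hyH]
    _ = (x * y).trace := by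
        rw [← trace_conjTranspose, conjTranspose_mul, conjTranspose_conjTranspose, hx.eq,
          trace_mul_comm]
    _ = (E x * y).trace := (hE.trace_mul_of_mem x hy).symm

lemma posDef (hE : IsCondExp N E) {x : Mat n} (hx : x.PosDef) : (E x).PosDef := by
  have hH := hE.isHermitian hx.isHermitian
  rw [hH.posDef_iff_eigenvalues_pos]
  intro i
  set μ := hH.eigenvalues i
  let ind : ℝ → ℂ := fun r => if r = μ then 1 else 0
  let P := hH.spectralCalc ind
  have hPN : P ∈ N := hH.spectralCalc_mem (hE.1 x) ind
  have hPP : Pᴴ * P = P := by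
    rw [← star_eq_conjTranspose, ← map_star, ← map_mul]
    refine hH.spectralCalc_congr fun j => ?_
    by_cases hj : hH.eigenvalues j = μ <;> simp [ind, hj]
  have hEP : E x * P = (μ : ℂ) • P := by
    conv_lhs => rw [← hH.spectralCalc_ofReal]
    rw [← map_mul, ← map_smul]
    refine hH.spectralCalc_congr fun j => ?_
    by_cases hj : hH.eigenvalues j = μ <;> simp [ind, hj]
  have htrP : 0 < P.trace.re := by
    rw [hH.trace_spectralCalc, Complex.re_sum]
    refine Finset.sum_pos' (fun j _ => ?_) ⟨i, Finset.mem_univ i, by simp [ind, μ]⟩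
    by_cases hj : hH.eigenvalues j = μ <;> simp [ind, hj]
  have hP0 : P ≠ 0 := fun h => by simp [h] at htrP
  have hpos : 0 < μ * P.trace.re := by
    calc 0 < (P * x * Pᴴ).trace.re := hx.re_trace_mul_mul_conjTranspose_pos hP0
      _ = (E x * P).trace.re := by
        rw [trace_mul_cycle, hPP, trace_mul_comm, hE.trace_mul_of_mem x hPN]
      _ = μ * P.trace.re := by rw [hEP, trace_smul, smul_eq_mul, Complex.re_ofReal_mul]
  exact pos_of_mul_pos_left hpos htrP.le

end IsCondExp

end ConditionalExpectation

section RecoveryMap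

open Complex

variable {n : ℕ}

lemma trace_rotPetz {N : StarSubalgebra ℂ (Mat n)} {E : Mat n →ₗ[ℂ] Mat n} (hE : IsCondExp N E)
    {σ : Mat n} (hσ : σ.PosDef) (t : ℝ) {x : Mat n} (hx : x ∈ N) :
    (rotPetz σ (E σ) t x).trace = x.trace := by
  have hσN := hE.posDef hσ
  have hZ : mpow (E σ) (-(1/2) + I * t) * x * mpow (E σ) (-(1/2) - I * t) ∈ N :=
    mul_mem (mul_mem (mpow_mem hσN.isHermitian (hE.1 σ) _) hx)
      (mpow_mem hσN.isHermitian (hE.1 σ) _)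
  calc (rotPetz σ (E σ) t x).trace
      = (mpow σ (1/2 + I * t) * mpow σ (1/2 - I * t) *
          (mpow (E σ) (-(1/2) + I * t) * x * mpow (E σ) (-(1/2) - I * t))).trace := by
        rw [rotPetz, trace_mul_comm]
        simp only [Matrix.mul_assoc]
    _ = (E σ * (mpow (E σ) (-(1/2) + I * t) * x * mpow (E σ) (-(1/2) - I * t))).trace := by
        rw [mpow_mul_mpow hσ, show (1/2 + I * t) + (1/2 - I * t) = 1 by ring,
          mpow_one hσ.isHermitian, hE.trace_mul_of_mem σ hZ]
    _ = x.trace := by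
        rw [← Matrix.mul_assoc, ← Matrix.mul_assoc, mul_mpow hσN, trace_mul_cycle,
          mpow_mul_mpow hσN, show -(1/2) - I * t + (1 + (-(1/2) + I * t)) = 0 by ring,
          mpow_zero hσN.isHermitian, Matrix.one_mul]

noncomputable def petzFactor (σ σN ρN ρ : Mat n) (t : ℝ) : Mat n :=
  mpow σ (1/2 + I * t) * mpow σN (-(1/2) - I * t) * mpow ρN (1/2 + I * t) * mpow ρ (-(I * t))

lemma rotPetz_neg_eq_petzFactor_mul_conjTranspose {σ σN ρN ρ : Mat n} (hσ : σ.PosDef)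
    (hσN : σN.PosDef) (hρN : ρN.PosDef) (hρ : ρ.PosDef) (t : ℝ) :
    rotPetz σ σN (-t) ρN = petzFactor σ σN ρN ρ t * (petzFactor σ σN ρN ρ t)ᴴ := by
  have hcollapse : petzFactor σ σN ρN ρ t * (petzFactor σ σN ρN ρ t)ᴴ =
      mpow σ (1/2 + I * t) * mpow σN (-(1/2) - I * t) *
        (mpow ρN (1/2 + I * t) * (mpow ρ (-(I * t)) * (mpow ρ (-(I * t)))ᴴ) *
          (mpow ρN (1/2 + I * t))ᴴ) * (mpow σN (-(1/2) - I * t))ᴴ * (mpow σ (1/2 + I * t))ᴴ := by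
    simp only [petzFactor, conjTranspose_mul, Matrix.mul_assoc]
  have hre₀ : (2 * ((-(I * t)).re : ℂ)) = 0 := by simp
  have hre₁ : (2 * ((1/2 + I * t).re : ℂ)) = 1 := by simp
  have e₁ : (1/2 : ℂ) - I * ↑(-t) = 1/2 + I * t := by push_cast; ring
  have e₂ : -(1/2 : ℂ) + I * ↑(-t) = -(1/2) - I * t := by push_cast; ring
  have e₃ : -(1/2 : ℂ) - I * ↑(-t) = star (-(1/2) - I * t) := by simp
  have e₄ : (1/2 : ℂ) + I * ↑(-t) = star (1/2 + I * t) := by simp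
  rw [rotPetz, e₁, e₂, e₃, e₄, hcollapse, mpow_mul_conjTranspose_mpow hρ, hre₀,
    mpow_zero hρ.isHermitian, Matrix.mul_one, mpow_mul_conjTranspose_mpow hρN, hre₁,
    mpow_one hρN.isHermitian, conjTranspose_mpow hσN, conjTranspose_mpow hσ]

end RecoveryMap

theorem stmt8_general (n : ℕ) (N : StarSubalgebra ℂ (Mat n)) (E : Mat n →ₗ[ℂ] Mat n)
    (hE : IsCondExp N E)
    (ρ σ : Mat n) (hρ : ρ.PosDef) (hρ1 : ρ.trace = 1) (hσ : σ.PosDef)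
    (t : ℝ) :
    traceNorm (ρ - rotPetz σ (E σ) (-t) (E ρ)) ≤
      2 * hsNorm (mpow ρ (1/2) -
        mpow σ (1/2 + Complex.I * t) * mpow (E σ) (-(1/2) - Complex.I * t) *
          mpow (E ρ) (1/2 + Complex.I * t) * mpow ρ (-(Complex.I * t))) := by
  set A := mpow ρ (1/2)
  set B := petzFactor σ (E σ) (E ρ) ρ t
  have hR : rotPetz σ (E σ) (-t) (E ρ) = B * Bᴴ :=
    rotPetz_neg_eq_petzFactor_mul_conjTranspose hσ (hE.posDef hσ) (hE.posDef hρ) hρ t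
  have hA : hsNorm A = 1 :=
    hsNorm_eq_one_of_trace_mul_conjTranspose (by rw [mpow_half_mul_conjTranspose hρ, hρ1])
  have hB : hsNorm B = 1 := hsNorm_eq_one_of_trace_mul_conjTranspose (by
    rw [← hR, trace_rotPetz hE hσ _ (hE.1 ρ), hE.trace_eq, hρ1])
  calc traceNorm (ρ - rotPetz σ (E σ) (-t) (E ρ)) = traceNorm (A * Aᴴ - B * Bᴴ) := by
        rw [hR, mpow_half_mul_conjTranspose hρ]
    _ ≤ (hsNorm A + hsNorm B) * hsNorm (A - B) := traceNorm_mul_conjTranspose_sub_le A B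
    _ = 2 * hsNorm (A - B) := by rw [hA, hB]; norm_num

/-- part of Lemma 3.10.
For faithful states `ρ, σ` of `Mₙ(ℂ)` and `t ∈ ℝ`:
`‖ρ − R_σ^{−t}(ρ_N)‖₁ ≤ 2 ‖ρ^{1/2} − σ^{1/2+it} σ_N^{−1/2−it} ρ_N^{1/2+it} ρ^{−it}‖₂`. -/
theorem stmt8 (n : ℕ) (N : StarSubalgebra ℂ (Mat n)) (E : Mat n →ₗ[ℂ] Mat n)
    (hE : IsCondExp N E)
    (ρ σ : Mat n) (hρ : ρ.PosDef) (hρ1 : ρ.trace = 1) (hσ : σ.PosDef) (hσ1 : σ.trace = 1)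
    (t : ℝ) :
    traceNorm (ρ - rotPetz σ (E σ) (-t) (E ρ)) ≤
      2 * hsNorm (mpow ρ (1/2) -
        mpow σ (1/2 + Complex.I * t) * mpow (E σ) (-(1/2) - Complex.I * t) *
          mpow (E ρ) (1/2 + Complex.I * t) * mpow ρ (-(Complex.I * t))) :=
  stmt8_general n N E hE ρ σ hρ hρ1 hσ t

end QFDiv
end
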